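/- There is a constant C depending only on ‖f‖ := sup|f| + sup|f'| such that the following holds: if b ≥ 2 is an integer, K ≥ 1 and k > K are integers, and a_i = b for all i with k−K ≤ i ≤ k+2, then for j = k and j = k+1 one has ‖u_j − g‖ ≤ C · 2^{−K}, where g := ∑_{i=0}^{∞} (T̂*_b)^i f (the series converges in the norm ‖·‖). -/

import Mathlib

/-!
Setting: the circle `S¹ = ℝ/ℤ` with Lebesgue (Haar) probability measure, realized as
`1`-periodic functions on `ℝ` together with Lebesgue measure restricted to `(0, 1]`.
For an integer `b ≥ 2`, the map `T_b x = bx (mod 1)` lifts to `x ↦ b * x` on `ℝ`, and its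
Perron–Frobenius operator (the `L²`-adjoint of the Koopman operator `g ↦ g ∘ T_b`) is
`(T̂*_b g)(x) = (1/b) ∑_{j<b} g((x+j)/b)`.
-/

open MeasureTheory ProbabilityTheory Filter Function
open scoped ENNReal Topology

/-- The Lebesgue (Haar) probability measure of the circle, realized on `(0, 1] ⊆ ℝ`. -/
noncomputable def circleMeasure : Measure ℝ := volume.restrict (Set.Ioc 0 1)

/-- The Perron–Frobenius operator of `T_b x = bx (mod 1)`, acting on (`1`-periodic)
functions on `ℝ`: `(T̂*_b g)(x) = (1/b) ∑_{j<b} g((x+j)/b)`. -/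
noncomputable def PFc (b : ℕ) (g : ℝ → ℝ) : ℝ → ℝ :=
  fun x => (1 / (b : ℝ)) * ∑ j ∈ Finset.range b, g ((x + j) / b)

/-- `T̂*_{b_1} ⋯ T̂*_{b_k} g` for a finite sequence `[b_1, …, b_k]`. -/
noncomputable def PFcList (l : List ℕ) (g : ℝ → ℝ) : ℝ → ℝ := l.foldr PFc g

/-- `PFcSeg a i j = T̂*_{[i..j]} = T̂*_{a_j} ⋯ T̂*_{a_i}` for `i ≤ j`, the identity otherwise. -/
noncomputable def PFcSeg (a : ℕ → ℕ) (i : ℕ) : ℕ → (ℝ → ℝ) → (ℝ → ℝ)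
  | 0 => id
  | j + 1 => if i ≤ j + 1 then fun g => PFc (a (j + 1)) (PFcSeg a i j g) else id

/-- `u_k = ∑_{i=1}^k T̂*_{[i+1..k]} f`. -/
noncomputable def uc (a : ℕ → ℕ) (f : ℝ → ℝ) (k : ℕ) : ℝ → ℝ :=
  fun x => ∑ i ∈ Finset.Icc 1 k, PFcSeg a (i + 1) k f x

/-- `T_{[k]} = T_{a_k} ∘ ⋯ ∘ T_{a_1}` is multiplication (mod 1) by `∏_{i=1}^k a_i`. -/
def prodA (a : ℕ → ℕ) (k : ℕ) : ℕ := ∏ i ∈ Finset.Icc 1 k, a i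

/-- The Birkhoff-like sums `S_n = ∑_{k=1}^n f ∘ T_{[k]}`, for a `1`-periodic `f`. -/
noncomputable def Sc (a : ℕ → ℕ) (f : ℝ → ℝ) (n : ℕ) : ℝ → ℝ :=
  fun x => ∑ k ∈ Finset.Icc 1 n, f ((prodA a k : ℝ) * x)

/-- The `C¹`-norm `‖g‖ = sup|g| + sup|g'|`. -/
noncomputable def Cnorm (g : ℝ → ℝ) : ℝ := (⨆ x : ℝ, |g x|) + ⨆ x : ℝ, |deriv g x|

/-- The pullback σ-algebra `T_b^{-1}(Borel)` on the circle, realized on `ℝ` as the σ-algebra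
generated by the lift `x ↦ fract (b * x)` of `T_b`. -/
noncomputable def circleSigma (b : ℕ) : MeasurableSpace ℝ :=
  MeasurableSpace.comap (fun x => Int.fract ((b : ℝ) * x)) Real.measurableSpace

/-- `cos²χ_k = ‖E[u_k | T_{a_{k+1}}^{-1}(Borel)]‖²_{L²} / ‖u_k‖²_{L²}` (`= 0` when `u_k = 0`,
by the convention `c / 0 = 0`). -/
noncomputable def cos2c (a : ℕ → ℕ) (f : ℝ → ℝ) (k : ℕ) : ℝ :=
  (∫ x, ((circleMeasure[uc a f k|circleSigma (a (k + 1))]) x) ^ 2 ∂circleMeasure) /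
    ∫ x, (uc a f k x) ^ 2 ∂circleMeasure

/-- `g = ∑_{i=0}^∞ (T̂*_b)^i f`, defined pointwise (the series converges in `C¹`-norm). -/
noncomputable def PFgeom (b : ℕ) (f : ℝ → ℝ) : ℝ → ℝ :=
  fun x => ∑' i : ℕ, (PFc b)^[i] f x

/-!
The operators compose multiplicatively, `T̂*_m T̂*_n = T̂*_{mn}`, so
`u_j = ∑_{m<j} T̂*_{Q_m} f` with `Q_m = a_j ⋯ a_{j-m+1}`. While the window of indices with
`a_i = b` reaches back `m` steps, `Q_m = b^m` and these terms cancel the head of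
`g = ∑_m T̂*_{b^m} f`; all remaining terms, of `u_j` and of `g`, have `Q ≥ 2^{m+M}` with `M > K`.
For a mean-zero `L`-Lipschitz periodic `f`, `T̂*_N f` is the error of a Riemann sum over one
period, so `|T̂*_N f| ≤ L / N`; and `(T̂*_N f)' = T̂*_N f' / N` is bounded by `L / N` as well.
Summing the geometric bounds gives `‖u_j - g‖ ≤ 8 L 2^{-M}`.
-/

open Finset
open scoped NNReal

theorem Finset.sum_range_mul {M : Type*} [AddCommMonoid M] (F : ℕ → M) (m n : ℕ) :
    ∑ q ∈ range (m * n), F q = ∑ l ∈ range n, ∑ j ∈ range m, F (l * m + j) := by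
  induction n with
  | zero => simp
  | succ n ih => rw [Nat.mul_succ, sum_range_add, ih, sum_range_succ, Nat.mul_comm]

theorem PFc_one (g : ℝ → ℝ) : PFc 1 g = g := by
  funext x
  simp [PFc]

theorem PFc_PFc (m n : ℕ) (g : ℝ → ℝ) : PFc m (PFc n g) = PFc (m * n) g := by
  funext x
  rcases eq_or_ne m 0 with rfl | hm
  · simp [PFc]
  rcases eq_or_ne n 0 with rfl | hn
  · simp [PFc]
  simp only [PFc, sum_range_mul, mul_sum]
  rw [sum_comm]
  refine sum_congr rfl fun l _ => sum_congr rfl fun j _ => ?_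
  push_cast
  field_simp
  congr 2
  ring

theorem iterate_PFc (b i : ℕ) (g : ℝ → ℝ) : (PFc b)^[i] g = PFc (b ^ i) g := by
  induction i with
  | zero => rw [iterate_zero_apply, pow_zero, PFc_one]
  | succ i ih => rw [iterate_succ_apply', ih, PFc_PFc, pow_succ']

theorem PFcSeg_succ_eq_PFc_prod (a : ℕ → ℕ) (i j : ℕ) (g : ℝ → ℝ) :
    PFcSeg a (i + 1) j g = PFc (∏ t ∈ Ioc i j, a t) g := by
  induction j with
  | zero => simp [PFcSeg, PFc_one]
  | succ j ih =>
    by_cases hij : i ≤ j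
    · rw [PFcSeg, if_pos (by omega), ih, PFc_PFc, prod_Ioc_succ_top hij, mul_comm]
    · rw [PFcSeg, if_neg (by omega), Ioc_eq_empty (by omega), prod_empty, PFc_one]
      rfl

theorem uc_eq_sum_range (a : ℕ → ℕ) (f : ℝ → ℝ) (j : ℕ) (x : ℝ) :
    uc a f j x = ∑ m ∈ range j, PFc (∏ t ∈ Ioc (j - m) j, a t) f x := by
  simp only [uc, PFcSeg_succ_eq_PFc_prod]
  refine sum_nbij' (j - ·) (j - ·) ?_ ?_ ?_ ?_ fun i hi => ?_
  iterate 4 · intro i hi; simp only [mem_Icc, mem_range] at hi ⊢; omega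
  rw [Nat.sub_sub_self (mem_Icc.1 hi).2]

theorem Function.Periodic.deriv {f : ℝ → ℝ} {c : ℝ} (hf : Periodic f c) :
    Periodic (deriv f) c := fun x => by
  rw [← deriv_comp_add_const, hf.funext]

theorem hasDerivAt_PFc {f : ℝ → ℝ} (hf : Differentiable ℝ f) (N : ℕ) (x : ℝ) :
    HasDerivAt (PFc N f) (PFc N (deriv f) x / N) x := by
  have hsum := HasDerivAt.fun_sum (u := range N) fun j _ =>
    (hf ((x + j) / N)).hasDerivAt.comp x (((hasDerivAt_id x).add_const (j : ℝ)).div_const N)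
  refine (hsum.const_mul (1 / (N : ℝ))).congr_deriv ?_
  simp only [PFc, ← sum_mul]
  ring

theorem abs_PFc_le {g : ℝ → ℝ} {B : ℝ} (hg : ∀ y, |g y| ≤ B) (N : ℕ) (x : ℝ) :
    |PFc N g x| ≤ B := by
  rcases eq_or_ne N 0 with rfl | hN
  · simpa [PFc] using (abs_nonneg _).trans (hg 0)
  have hN' : (0 : ℝ) < N := by positivity
  calc |PFc N g x| ≤ 1 / N * ∑ j ∈ range N, |g ((x + j) / N)| := by
        rw [PFc, abs_mul, abs_of_pos (by positivity)]
        gcongr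
        exact abs_sum_le_sum_abs _ _
    _ ≤ 1 / N * ∑ j ∈ range N, B := by gcongr; exact hg _
    _ = B := by simp [field]

theorem abs_mul_sub_integral_le {f : ℝ → ℝ} {L : ℝ≥0} (hf : LipschitzWith L f) {δ : ℝ}
    (hδ : 0 ≤ δ) (c : ℝ) : |δ * f c - ∫ t in c..c + δ, f t| ≤ L * δ ^ 2 := by
  have hconst : δ * f c = ∫ _ in c..c + δ, f c := by simp
  rw [hconst, ← intervalIntegral.integral_sub intervalIntegrable_const
    (hf.continuous.intervalIntegrable _ _)]
  have hbound : ∀ t ∈ Set.uIoc c (c + δ), ‖f c - f t‖ ≤ L * δ := by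
    intro t ht
    rw [Set.uIoc_of_le (by linarith), Set.mem_Ioc] at ht
    calc ‖f c - f t‖ = dist (f c) (f t) := rfl
      _ ≤ L * dist c t := hf.dist_le_mul c t
      _ ≤ L * δ := by
        gcongr
        rw [Real.dist_eq, abs_le]
        constructor <;> linarith
  calc _ ≤ L * δ * |c + δ - c| := intervalIntegral.norm_integral_le_of_norm_le_const hbound
    _ = L * δ ^ 2 := by rw [add_sub_cancel_left, abs_of_nonneg hδ]; ring

theorem abs_PFc_le_of_lipschitzWith {f : ℝ → ℝ} {L : ℝ≥0} (hper : Periodic f 1)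
    (hmean : ∫ t in (0 : ℝ)..1, f t = 0) (hf : LipschitzWith L f) (N : ℕ) (x : ℝ) :
    |PFc N f x| ≤ L / N := by
  rcases eq_or_ne N 0 with rfl | hN
  · simp [PFc]
  have hN' : (0 : ℝ) < N := by positivity
  set c : ℕ → ℝ := fun j => (x + j) / N with hc
  have hstep : ∀ j, c (j + 1) = c j + 1 / N := fun j => by simp only [hc]; push_cast; ring
  have hperiod : ∑ j ∈ range N, ∫ t in c j..c (j + 1), f t = 0 := by
    rw [intervalIntegral.sum_integral_adjacent_intervals
      fun j _ => hf.continuous.intervalIntegrable _ _]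
    have hcN : c N = c 0 + 1 := by simp only [hc]; field_simp; ring
    rw [hcN, hper.intervalIntegral_add_eq, zero_add, hmean]
  have hPFc : PFc N f x = ∑ j ∈ range N, (1 / N * f (c j) - ∫ t in c j..c j + 1 / N, f t) := by
    simp only [← hstep, sum_sub_distrib, hperiod, sub_zero, PFc, mul_sum]
    rfl
  calc |PFc N f x| ≤ ∑ j ∈ range N, |1 / N * f (c j) - ∫ t in c j..c j + 1 / N, f t| := by
        rw [hPFc]; exact abs_sum_le_sum_abs _ _
    _ ≤ ∑ j ∈ range N, L * (1 / N : ℝ) ^ 2 := by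
        gcongr; exact abs_mul_sub_integral_le hf (by positivity) _
    _ = L / N := by simp [field]

theorem Cnorm_le_of_hasDerivAt {h h' : ℝ → ℝ} (hd : ∀ x, HasDerivAt h (h' x) x) {A B : ℝ}
    (hA : ∀ x, |h x| ≤ A) (hB : ∀ x, |h' x| ≤ B) : Cnorm h ≤ A + B :=
  add_le_add (ciSup_le hA) (ciSup_le fun x => (hd x).deriv ▸ hB x)

section GeometricBounds

variable {L : ℝ} {M : ℕ} {N : ℕ → ℕ} {v : ℕ → ℝ}

theorem div_le_div_two_pow_mul_half_pow (hL : 0 ≤ L) {m n : ℕ} (h : 2 ^ (m + M) ≤ n) :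
    L / n ≤ L / 2 ^ M * (1 / 2) ^ m := by
  calc L / n ≤ L / 2 ^ (m + M) := by gcongr; exact_mod_cast h
    _ = L / 2 ^ M * (1 / 2) ^ m := by rw [pow_add, one_div_pow]; field_simp

theorem abs_sum_range_le_of_two_pow_le (hL : 0 ≤ L) {n : ℕ} (hN : ∀ m < n, 2 ^ (m + M) ≤ N m)
    (hv : ∀ m < n, |v m| ≤ L / N m) : |∑ m ∈ range n, v m| ≤ 2 * L / 2 ^ M := by
  calc |∑ m ∈ range n, v m| ≤ ∑ m ∈ range n, L / 2 ^ M * (1 / 2) ^ m :=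
        (abs_sum_le_sum_abs _ _).trans <| sum_le_sum fun m hm =>
          (hv m (mem_range.1 hm)).trans (div_le_div_two_pow_mul_half_pow hL (hN m (mem_range.1 hm)))
    _ ≤ L / 2 ^ M * 2 := by rw [← mul_sum]; gcongr; exact sum_geometric_two_le n
    _ = 2 * L / 2 ^ M := by ring

theorem summable_of_two_pow_le (hL : 0 ≤ L) (hN : ∀ m, 2 ^ (m + M) ≤ N m)
    (hv : ∀ m, |v m| ≤ L / N m) : Summable v :=
  .of_norm_bounded (summable_geometric_two.mul_left _) fun m =>
    (hv m).trans (div_le_div_two_pow_mul_half_pow hL (hN m))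

theorem abs_tsum_le_of_two_pow_le (hL : 0 ≤ L) (hN : ∀ m, 2 ^ (m + M) ≤ N m)
    (hv : ∀ m, |v m| ≤ L / N m) : |∑' m, v m| ≤ 2 * L / 2 ^ M := by
  calc |∑' m, v m| ≤ L / 2 ^ M * 2 := (Real.norm_eq_abs _).symm.trans_le <|
        tsum_of_norm_bounded (hasSum_geometric_two.mul_left _)
          fun m => (hv m).trans (div_le_div_two_pow_mul_half_pow hL (hN m))
    _ = 2 * L / 2 ^ M := by ring

end GeometricBounds

theorem Cnorm_sum_sub_tsum_PFc_le {f : ℝ → ℝ} {L : ℝ≥0} (hper : Periodic f 1)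
    (hmean : ∫ t in (0 : ℝ)..1, f t = 0) (hf : Differentiable ℝ f)
    (hL : ∀ x, ‖deriv f x‖₊ ≤ L) {M n : ℕ} {N₁ N₂ : ℕ → ℕ}
    (hN₁ : ∀ m < n, 2 ^ (m + M) ≤ N₁ m) (hN₂ : ∀ m, 2 ^ (m + M) ≤ N₂ m) :
    Cnorm (fun x => ∑ m ∈ range n, PFc (N₁ m) f x - ∑' m, PFc (N₂ m) f x) ≤ 8 * L / 2 ^ M := by
  have hL0 : (0 : ℝ) ≤ L := L.2
  have hval : ∀ N x, |PFc N f x| ≤ L / N :=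
    abs_PFc_le_of_lipschitzWith hper hmean (lipschitzWith_of_nnnorm_deriv_le hf hL)
  have hder : ∀ N x, |PFc N (deriv f) x / N| ≤ L / N := fun N x => by
    rw [abs_div, Nat.abs_cast]
    gcongr
    exact abs_PFc_le (fun y => hL y) N x
  have htail : ∀ x, HasDerivAt (fun y => ∑' m, PFc (N₂ m) f y)
      (∑' m, PFc (N₂ m) (deriv f) x / N₂ m) x :=
    hasDerivAt_tsum (summable_geometric_two.mul_left ((L : ℝ) / 2 ^ M))
      (fun m => hasDerivAt_PFc hf (N₂ m))
      (fun m y => (hder _ y).trans (div_le_div_two_pow_mul_half_pow hL0 (hN₂ m)))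
      (summable_of_two_pow_le hL0 hN₂ fun m => hval _ 0)
  refine (Cnorm_le_of_hasDerivAt
    (fun x => (HasDerivAt.fun_sum fun m _ => hasDerivAt_PFc hf (N₁ m) x).fun_sub (htail x))
    (fun x => (abs_sub _ _).trans <| add_le_add
      (abs_sum_range_le_of_two_pow_le hL0 hN₁ fun m _ => hval _ x)
      (abs_tsum_le_of_two_pow_le hL0 hN₂ fun m => hval _ x))
    (fun x => (abs_sub _ _).trans <| add_le_add
      (abs_sum_range_le_of_two_pow_le hL0 hN₁ fun m _ => hder _ x)
      (abs_tsum_le_of_two_pow_le hL0 hN₂ fun m => hder _ x))).trans_eq (by ring)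

theorem summable_PFc_pow {f : ℝ → ℝ} {L : ℝ≥0} (hper : Periodic f 1)
    (hmean : ∫ t in (0 : ℝ)..1, f t = 0) (hf : LipschitzWith L f) {b : ℕ} (hb : 2 ≤ b) (x : ℝ) :
    Summable fun m => PFc (b ^ m) f x :=
  summable_of_two_pow_le (M := 0) L.2 (fun m => Nat.pow_le_pow_left hb m) fun _ =>
    abs_PFc_le_of_lipschitzWith hper hmean hf _ x

theorem two_pow_le_prod_Ioc {a : ℕ → ℕ} (ha : ∀ i, 2 ≤ a i) (i j : ℕ) :
    2 ^ (j - i) ≤ ∏ t ∈ Ioc i j, a t := by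
  simpa using pow_card_le_prod (Ioc i j) a 2 fun t _ => ha t

theorem uc_sub_PFgeom_eq {a : ℕ → ℕ} {b : ℕ} {f : ℝ → ℝ} {M n : ℕ}
    (hab : ∀ t, n < t → t ≤ M + n → a t = b) (hsum : ∀ x, Summable fun m => PFc (b ^ m) f x)
    (x : ℝ) :
    uc a f (M + n) x - PFgeom b f x =
      ∑ m ∈ range n, PFc (∏ t ∈ Ioc (n - m) (M + n), a t) f x - ∑' m, PFc (b ^ (m + M)) f x := by
  have hhead : ∀ m < M, ∏ t ∈ Ioc (M + n - m) (M + n), a t = b ^ m := fun m hm => by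
    rw [prod_congr rfl fun t ht => hab t (by grind) (mem_Ioc.1 ht).2, prod_const,
      Nat.card_Ioc, Nat.sub_sub_self (by omega)]
  simp only [PFgeom, iterate_PFc, uc_eq_sum_range, sum_range_add,
    ← (hsum x).sum_add_tsum_nat_add M]
  rw [sum_congr rfl fun m hm => by rw [hhead m (mem_range.1 hm)]]
  simp only [Nat.add_sub_add_left]
  ring

theorem uc_close_to_geometric_series
    (f : ℝ → ℝ) (hf_per : Periodic f 1) (hf_C1 : ContDiff ℝ 1 f)
    (hf_mean : ∫ x in Set.Ioc (0 : ℝ) 1, f x = 0) :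
    ∃ C : ℝ, ∀ a : ℕ → ℕ, (∀ i, 2 ≤ a i) →
      ∀ b : ℕ, 2 ≤ b → ∀ K k : ℕ, 1 ≤ K → K < k →
        (∀ i : ℕ, k - K ≤ i → i ≤ k + 2 → a i = b) →
        ∀ j : ℕ, j = k ∨ j = k + 1 →
          Cnorm (fun x => uc a f j x - PFgeom b f x) ≤ C / 2 ^ K := by
  have hf : Differentiable ℝ f := hf_C1.differentiable one_ne_zero
  have hmean : ∫ t in (0 : ℝ)..1, f t = 0 := by
    rwa [intervalIntegral.integral_of_le zero_le_one]
  obtain ⟨L, hL⟩ : ∃ L : ℝ≥0, ∀ x, ‖deriv f x‖₊ ≤ L := by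
    obtain ⟨C, hC⟩ := isBounded_iff_forall_norm_le.1 <|
      hf_per.deriv.isBounded_of_continuous one_ne_zero (hf_C1.continuous_deriv le_rfl)
    exact ⟨C.toNNReal, fun x => NNReal.coe_le_coe.1 <|
      (hC _ ⟨x, rfl⟩).trans (Real.le_coe_toNNReal C)⟩
  refine ⟨8 * L, fun a ha b hb K k hK hKk hab j hj => ?_⟩
  obtain ⟨M, rfl⟩ : ∃ M, j = M + (k - K - 1) := ⟨j - (k - K - 1), by omega⟩
  rw [funext <| uc_sub_PFgeom_eq (fun t _ _ => hab t (by omega) (by omega))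
    (summable_PFc_pow hf_per hmean (lipschitzWith_of_nnnorm_deriv_le hf hL) hb)]
  calc _ ≤ (8 * L : ℝ) / 2 ^ M := Cnorm_sum_sub_tsum_PFc_le hf_per hmean hf hL
        (fun m hm => (two_pow_le_prod_Ioc ha _ _).trans_eq' (by congr 1; omega))
        (fun m => Nat.pow_le_pow_left hb _)
    _ ≤ 8 * L / 2 ^ K := by gcongr; exacts [one_le_two, by omega]
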